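/- arXiv:1207.5120 — 3 statements merged into one kernel-verified Lean document; each statement's English description precedes it below -/
import Mathlib

section
/- Under the identification of a pair (E, φ) of rank n and degree d with the triple (E, 𝒪, φ), the pair (E,φ) is τ-stable if and only if the triple is σ-stable for σ = (n+1)τ - d. Equivalently, the map τ ↦ (n+1)τ - d is a strictly increasing affine bijection from ℝ to ℝ taking the τ-stability condition to the σ-stability condition. -/
/-!
We record the subobject data abstractly: `P ⊆ {1,…,n} × ℤ` is the set of
(rank, degree) of the nonzero subbundles `E' ⊆ E` (including `E` itself, which
gives the subtriple `(E',0)`), and `Pφ ⊆ P` those containing the section `φ`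
(which for `E' ≠ E` give the subtriples `(E',𝒪)`).  The `σ`-slope of a
subtriple of type `(n',d',m)` (`m ∈ {0,1}`) is
`(d' + 0)/(n'+m) + σ·m/(n'+m)`, and `μ_σ(E,𝒪,φ) = d/(n+1) + σ/(n+1)`.
-/

/-- `τ`-stability of the pair, in terms of the subbundle data. -/
def PairStable (n : ℕ) (d : ℤ) (P Pphi : Set (ℕ × ℤ)) (τ : ℝ) : Prop :=
  (∀ p ∈ P, (p.2 : ℝ) / (p.1 : ℝ) < τ) ∧
  (∀ p ∈ Pphi, p.1 < n → ((d - p.2 : ℤ) : ℝ) / ((n : ℝ) - p.1) > τ)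

/-- `σ`-stability of the associated triple `(E, 𝒪, φ)`:
`μ_σ(T') < μ_σ(T)` for all proper subtriples `T' = (E',0)` or `(E',𝒪)`. -/
def TripleStable (n : ℕ) (d : ℤ) (P Pphi : Set (ℕ × ℤ)) (σ : ℝ) : Prop :=
  (∀ p ∈ P, (p.2 : ℝ) / (p.1 : ℝ) <
      (d : ℝ) / ((n : ℝ) + 1) + σ / ((n : ℝ) + 1)) ∧
  (∀ p ∈ Pphi, p.1 < n →
      ((p.2 : ℝ) + σ) / ((p.1 : ℝ) + 1) <
        (d : ℝ) / ((n : ℝ) + 1) + σ / ((n : ℝ) + 1))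

/-- The choice `σ = (n+1)τ - d` is exactly the one making `μ_σ(E,𝒪,φ) = τ`. -/
lemma div_add_mul_sub_div_eq {a : ℝ} (ha : a ≠ 0) (d τ : ℝ) :
    d / a + (a * τ - d) / a = τ := by
  rw [← add_div, add_sub_cancel, mul_div_cancel_left₀ _ ha]

/-- With `σ = (n+1)τ - d`, both conditions say `d' + (n - n')τ < d`. -/
lemma lt_quotientSlope_iff_subtripleSlope_lt {n n' d d' τ : ℝ} (hlt : n' < n)
    (hpos : 0 < n' + 1) :
    τ < (d - d') / (n - n') ↔ (d' + ((n + 1) * τ - d)) / (n' + 1) < τ := by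
  rw [lt_div_iff₀ (sub_pos.2 hlt), div_lt_iff₀ hpos]
  constructor <;> intro h <;> linarith

theorem pair_triple_stability_correspondence_general
    (n : ℕ) (d : ℤ) (P Pphi : Set (ℕ × ℤ)) :
    StrictMono (fun τ : ℝ => ((n : ℝ) + 1) * τ - d) ∧
    Function.Bijective (fun τ : ℝ => ((n : ℝ) + 1) * τ - d) ∧
    (∀ τ : ℝ,
      PairStable n d P Pphi τ ↔
        TripleStable n d P Pphi (((n : ℝ) + 1) * τ - d)) := by
  have hpos : (0 : ℝ) < (n : ℝ) + 1 := by positivity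
  let e : ℝ ≃o ℝ := (OrderIso.mulLeft₀ _ hpos).trans (OrderIso.subRight (d : ℝ))
  refine ⟨e.strictMono, e.bijective, fun τ => ?_⟩
  rw [PairStable, TripleStable, div_add_mul_sub_div_eq hpos.ne']
  refine and_congr_right' (forall₂_congr fun p _ => imp_congr_right fun hlt => ?_)
  push_cast
  exact lt_quotientSlope_iff_subtripleSlope_lt (Nat.cast_lt.2 hlt) (by positivity)

theorem pair_triple_stability_correspondence
    (n : ℕ) (hn : 1 ≤ n) (d : ℤ) (P Pphi : Set (ℕ × ℤ))
    (hPphi : Pphi ⊆ P)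
    (hP : ∀ p ∈ P, 1 ≤ p.1 ∧ p.1 ≤ n) :
    StrictMono (fun τ : ℝ => ((n : ℝ) + 1) * τ - d) ∧
    Function.Bijective (fun τ : ℝ => ((n : ℝ) + 1) * τ - d) ∧
    (∀ τ : ℝ,
      PairStable n d P Pphi τ ↔
        TripleStable n d P Pphi (((n : ℝ) + 1) * τ - d)) :=
  pair_triple_stability_correspondence_general n d P Pphi
end

section
/- Let π be a partition of [b] and I ⊂ [b] a subset, and let G be a subgroup of the symmetric group 𝔖_b stabilizing both π (as a set of blocks) and I. Let π_I = {I, I^c} and let P be the partition of the set π given by β₁ ∼ β₂ iff |β₁ ∩ I| = |β₂ ∩ I| and |β₁ ∩ I^c| = |β₂ ∩ I^c|. If G = Stab_{𝔖_𝐧}(π, I) for 𝔖_𝐧 the full stabilizer inside a Young subgroup, then there is a short exact sequence 1 → 𝔖_{π ∧ π_I} → G → 𝔖_P → 1, where 𝔖_{π ∧ π_I} is the product of symmetric groups on the blocks of π ∧ π_I and 𝔖_P permutes blocks within each class of P. -/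
open Pointwise

private lemma exists_perm_of_card_eq {α : Type*} [Finite α] {J : Type*} (S : J → Set α)
    (hd : ∀ j j', j ≠ j' → Disjoint (S j) (S j'))
    (hc : ∀ x, ∃ j, x ∈ S j)
    (σ : Equiv.Perm J) (hcard : ∀ j, Nat.card (S (σ j)) = Nat.card (S j)) :
    ∃ g : Equiv.Perm α, ∀ j, g • S j = S (σ j) := by
  classical
  set idx : α → J := fun x => (hc x).choose with hidxdef
  have hmem : ∀ x, x ∈ S (idx x) := fun x => (hc x).choose_spec
  have huniq : ∀ {x j}, x ∈ S j → idx x = j := by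
    intro x j hx
    by_contra h
    exact (hd _ _ h).ne_of_mem (hmem x) hx rfl
  have h1 : ∀ j, Nat.card {x // idx x = j} = Nat.card (S j) := by
    intro j
    exact Nat.card_congr (Equiv.subtypeEquivRight fun x => ⟨fun h => h ▸ hmem x, huniq⟩)
  have e : ∀ j, {x // idx x = j} ≃ {x // idx x = σ j} := fun j =>
    (Finite.card_eq.mp ((h1 j).trans ((hcard j).symm.trans (h1 (σ j)).symm))).some
  let g : Equiv.Perm α :=
    (Equiv.sigmaFiberEquiv idx).symm.trans ((Equiv.sigmaCongr σ e).trans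
      (Equiv.sigmaFiberEquiv idx))
  have hg : ∀ x, idx (g x) = σ (idx x) := by
    intro x
    have hx : g x = (e (idx x) ⟨x, rfl⟩).1 := rfl
    rw [hx]
    exact (e (idx x) ⟨x, rfl⟩).2
  have key : ∀ (x : α) (j : J), x ∈ S j ↔ g x ∈ S (σ j) := by
    intro x j
    constructor
    · intro hx
      have h2 := hmem (g x)
      rwa [hg x, huniq hx] at h2
    · intro hx
      have h2 := huniq hx
      rw [hg x] at h2
      have h3 := σ.injective h2
      have := hmem x
      rwa [h3] at this
  refine ⟨g, fun j => ?_⟩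
  ext y
  constructor
  · rintro ⟨x, hx, rfl⟩
    exact (key x j).1 hx
  · intro hy
    refine ⟨g.symm y, (key _ j).2 ?_, g.apply_symm_apply y⟩
    show g (g.symm y) ∈ S (σ j)
    rwa [g.apply_symm_apply]

theorem stabilizer_exact_sequence (b : ℕ)
    (π : Set (Set (Fin b)))
    (hne : ∀ β ∈ π, β.Nonempty)
    (hdisj : ∀ β₁ ∈ π, ∀ β₂ ∈ π, β₁ ≠ β₂ → Disjoint β₁ β₂)
    (hcov : ⋃₀ π = Set.univ)
    (I : Set (Fin b)) :
    -- `G = Stab_{𝔖_b}(π, I)`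
    let G : Subgroup (Equiv.Perm (Fin b)) :=
      MulAction.stabilizer (Equiv.Perm (Fin b)) π ⊓
        MulAction.stabilizer (Equiv.Perm (Fin b)) I
    -- `𝔖_{π ∧ π_I}`: permutations fixing every block of the refinement
    let Kset : Set (Equiv.Perm (Fin b)) :=
      {g | ∀ β ∈ π, g • (β ∩ I) = β ∩ I ∧ g • (β ∩ Iᶜ) = β ∩ Iᶜ}
    ∃ φ : G →* Equiv.Perm {β : Set (Fin b) // β ∈ π},
      -- `φ` describes the action of `G` on the blocks of `π`
      (∀ (g : G) (β : {β : Set (Fin b) // β ∈ π}),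
        ((φ g β : Set (Fin b))) = (g : Equiv.Perm (Fin b)) • (β : Set (Fin b))) ∧
      -- exactness at `G`: the kernel is `𝔖_{π ∧ π_I}` (in particular
      -- `𝔖_{π ∧ π_I} ⊆ G` and it is normal in `G`)
      (∀ g : G, φ g = 1 ↔ (g : Equiv.Perm (Fin b)) ∈ Kset) ∧
      (Kset ⊆ (G : Set (Equiv.Perm (Fin b)))) ∧
      -- exactness at `𝔖_P`: the image is exactly `𝔖_P`
      (∀ ρ : Equiv.Perm {β : Set (Fin b) // β ∈ π},
        ρ ∈ φ.range ↔
          ∀ β : {β : Set (Fin b) // β ∈ π},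
            ((ρ β : Set (Fin b)) ∩ I).ncard = ((β : Set (Fin b)) ∩ I).ncard ∧
            ((ρ β : Set (Fin b)) ∩ Iᶜ).ncard = ((β : Set (Fin b)) ∩ Iᶜ).ncard) := by
  classical
  intro G Kset
  -- blocks are stable under G
  have hGmem : ∀ g : Equiv.Perm (Fin b), g ∈ G → g • π = π ∧ g • I = I := by
    intro g hg
    obtain ⟨h1, h2⟩ := Subgroup.mem_inf.mp hg
    exact ⟨h1, h2⟩
  have hsmul_mem : ∀ g : Equiv.Perm (Fin b), g ∈ G → ∀ β ∈ π, g • β ∈ π := by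
    intro g hg β hβ
    rw [← (hGmem g hg).1]
    exact Set.smul_mem_smul_set hβ
  -- the union of the pieces β ∩ I is I
  have hIunion : I = ⋃ β : {β : Set (Fin b) // β ∈ π}, ((β : Set (Fin b)) ∩ I) := by
    ext x
    simp only [Set.mem_iUnion]
    constructor
    · intro hx
      have hx' : x ∈ ⋃₀ π := by rw [hcov]; trivial
      obtain ⟨β, hβ, hxβ⟩ := hx'
      exact ⟨⟨β, hβ⟩, hxβ, hx⟩
    · rintro ⟨β, hx⟩
      exact hx.2
  -- fixing every block pointwise-setwise implies membership in G
  have hKsub : Kset ⊆ (G : Set (Equiv.Perm (Fin b))) := by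
    intro g hg
    have hfix : ∀ β ∈ π, g • β = β := by
      intro β hβ
      have := hg β hβ
      calc g • β = g • ((β ∩ I) ∪ (β ∩ Iᶜ)) := by rw [Set.inter_union_compl]
        _ = g • (β ∩ I) ∪ g • (β ∩ Iᶜ) := Set.smul_set_union
        _ = (β ∩ I) ∪ (β ∩ Iᶜ) := by rw [this.1, this.2]
        _ = β := Set.inter_union_compl β I
    refine Subgroup.mem_inf.mpr ⟨?_, ?_⟩
    · show g • π = π
      rw [← Set.image_smul]
      rw [Set.image_congr hfix]
      exact Set.image_id π
    · show g • I = I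
      rw [hIunion, Set.smul_set_iUnion]
      exact Set.iUnion_congr fun β => (hg β β.2).1
  -- definition of φ
  refine ⟨{
      toFun := fun g =>
        { toFun := fun β => ⟨(g : Equiv.Perm (Fin b)) • (β : Set (Fin b)),
            hsmul_mem _ g.2 _ β.2⟩
          invFun := fun β => ⟨((g⁻¹ : G) : Equiv.Perm (Fin b)) • (β : Set (Fin b)),
            hsmul_mem _ (g⁻¹).2 _ β.2⟩
          left_inv := fun β => Subtype.ext (by simp)
          right_inv := fun β => Subtype.ext (by simp) }
      map_one' := Equiv.ext fun β => Subtype.ext (by simp)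
      map_mul' := fun g h => Equiv.ext fun β => Subtype.ext (by simp [mul_smul]) },
    fun g β => rfl, ?_, hKsub, ?_⟩
  · -- kernel
    intro g
    have hgI : (g : Equiv.Perm (Fin b)) • I = I := (hGmem _ g.2).2
    constructor
    · intro h β hβ
      have hfix : (g : Equiv.Perm (Fin b)) • β = β := by
        have := congrArg (fun ρ => ((ρ ⟨β, hβ⟩ : {β // β ∈ π}) : Set (Fin b))) h
        simpa using this
      constructor
      · rw [Set.smul_set_inter, hfix, hgI]
      · rw [Set.smul_set_inter, hfix, Set.smul_set_compl, hgI]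
    · intro h
      refine Equiv.ext fun β => Subtype.ext ?_
      show (g : Equiv.Perm (Fin b)) • (β : Set (Fin b)) = β
      have hβ := h β β.2
      calc (g : Equiv.Perm (Fin b)) • (β : Set (Fin b))
          = (g : Equiv.Perm (Fin b)) • (((β : Set (Fin b)) ∩ I) ∪ ((β : Set (Fin b)) ∩ Iᶜ)) := by
            rw [Set.inter_union_compl]
        _ = ((β : Set (Fin b)) ∩ I) ∪ ((β : Set (Fin b)) ∩ Iᶜ) := by
            rw [Set.smul_set_union, hβ.1, hβ.2]
        _ = β := Set.inter_union_compl _ I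
  · -- image
    intro ρ
    constructor
    · rintro ⟨g, rfl⟩ β
      have hgI : (g : Equiv.Perm (Fin b)) • I = I := (hGmem _ g.2).2
      have h1 : ∀ s : Set (Fin b), ((g : Equiv.Perm (Fin b)) • s).ncard = s.ncard := by
        intro s
        rw [show (g : Equiv.Perm (Fin b)) • s = (g : Equiv.Perm (Fin b)) '' s from rfl]
        exact Set.ncard_image_of_injective s (Equiv.injective _)
      constructor
      · show ((g : Equiv.Perm (Fin b)) • (β : Set (Fin b)) ∩ I).ncard = _
        have he : (g : Equiv.Perm (Fin b)) • (β : Set (Fin b)) ∩ I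
            = (g : Equiv.Perm (Fin b)) • ((β : Set (Fin b)) ∩ I) := by
          rw [Set.smul_set_inter, hgI]
        rw [he, h1]
      · show ((g : Equiv.Perm (Fin b)) • (β : Set (Fin b)) ∩ Iᶜ).ncard = _
        have he : (g : Equiv.Perm (Fin b)) • (β : Set (Fin b)) ∩ Iᶜ
            = (g : Equiv.Perm (Fin b)) • ((β : Set (Fin b)) ∩ Iᶜ) := by
          rw [Set.smul_set_inter, Set.smul_set_compl, hgI]
        rw [he, h1]
    · intro hρ
      -- build a permutation realizing ρ using the gluing lemma
      set S : ({β : Set (Fin b) // β ∈ π} × Bool) → Set (Fin b) := fun j =>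
        if j.2 then (j.1 : Set (Fin b)) ∩ I else (j.1 : Set (Fin b)) ∩ Iᶜ with hSdef
      have hStrue : ∀ β : {β : Set (Fin b) // β ∈ π}, S (β, true) = (β : Set (Fin b)) ∩ I := by
        intro β; simp [hSdef]
      have hSfalse : ∀ β : {β : Set (Fin b) // β ∈ π}, S (β, false) = (β : Set (Fin b)) ∩ Iᶜ := by
        intro β; simp [hSdef]
      have hsub : ∀ (β : {β : Set (Fin b) // β ∈ π}) (t : Bool),
          S (β, t) ⊆ (β : Set (Fin b)) := by
        rintro β (_ | _)
        · rw [hSfalse]; exact Set.inter_subset_left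
        · rw [hStrue]; exact Set.inter_subset_left
      have hd : ∀ j j', j ≠ j' → Disjoint (S j) (S j') := by
        rintro ⟨β, t⟩ ⟨β', t'⟩ hne'
        by_cases hββ' : β = β'
        · subst hββ'
          rcases t with _ | _ <;> rcases t' with _ | _
          · exact absurd rfl hne'
          · rw [hSfalse, hStrue]
            exact (disjoint_compl_left (a := I)).mono inf_le_right inf_le_right
          · rw [hSfalse, hStrue]
            exact (disjoint_compl_right (a := I)).mono inf_le_right inf_le_right
          · exact absurd rfl hne'
        · have hd' : Disjoint (β : Set (Fin b)) (β' : Set (Fin b)) :=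
            hdisj _ β.2 _ β'.2 (fun h => hββ' (Subtype.ext h))
          exact hd'.mono (hsub β t) (hsub β' t')
      have hc : ∀ x, ∃ j, x ∈ S j := by
        intro x
        have hx' : x ∈ ⋃₀ π := by rw [hcov]; trivial
        obtain ⟨β, hβ, hxβ⟩ := hx'
        by_cases hxI : x ∈ I
        · exact ⟨(⟨β, hβ⟩, true), by simp [hSdef, hxβ, hxI]⟩
        · exact ⟨(⟨β, hβ⟩, false), by simp [hSdef, hxβ, hxI]⟩
      set σ : Equiv.Perm ({β : Set (Fin b) // β ∈ π} × Bool) :=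
        Equiv.prodCongr ρ (Equiv.refl Bool) with hσdef
      have hσap : ∀ (β : {β : Set (Fin b) // β ∈ π}) (t : Bool), σ (β, t) = (ρ β, t) := by
        intro β t; rfl
      have hcard : ∀ j, Nat.card (S (σ j)) = Nat.card (S j) := by
        rintro ⟨β, t⟩
        have := hρ β
        rcases t with _ | _
        · rw [hσap, hSfalse, hSfalse, Nat.card_coe_set_eq, Nat.card_coe_set_eq]
          exact this.2
        · rw [hσap, hStrue, hStrue, Nat.card_coe_set_eq, Nat.card_coe_set_eq]
          exact this.1
      obtain ⟨g, hgS⟩ := exists_perm_of_card_eq S hd hc σ hcard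
      have hgI' : ∀ β : {β : Set (Fin b) // β ∈ π},
          g • ((β : Set (Fin b)) ∩ I) = ((ρ β : Set (Fin b)) ∩ I) := by
        intro β
        have h := hgS (β, true)
        rwa [hσap, hStrue, hStrue] at h
      have hgIc : ∀ β : {β : Set (Fin b) // β ∈ π},
          g • ((β : Set (Fin b)) ∩ Iᶜ) = ((ρ β : Set (Fin b)) ∩ Iᶜ) := by
        intro β
        have h := hgS (β, false)
        rwa [hσap, hSfalse, hSfalse] at h
      have hgβ : ∀ β : {β : Set (Fin b) // β ∈ π},
          g • (β : Set (Fin b)) = (ρ β : Set (Fin b)) := by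
        intro β
        calc g • (β : Set (Fin b))
            = g • (((β : Set (Fin b)) ∩ I) ∪ ((β : Set (Fin b)) ∩ Iᶜ)) := by
              rw [Set.inter_union_compl]
          _ = ((ρ β : Set (Fin b)) ∩ I) ∪ ((ρ β : Set (Fin b)) ∩ Iᶜ) := by
              rw [Set.smul_set_union, hgI' β, hgIc β]
          _ = (ρ β : Set (Fin b)) := Set.inter_union_compl _ I
      have hgG : g ∈ G := by
        refine Subgroup.mem_inf.mpr ⟨?_, ?_⟩
        · show g • π = π
          rw [← Set.image_smul]
          ext s
          constructor
          · rintro ⟨β, hβ, rfl⟩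
            show g • β ∈ π
            rw [show g • β = ((ρ ⟨β, hβ⟩ : {β // β ∈ π}) : Set (Fin b)) from hgβ ⟨β, hβ⟩]
            exact (ρ ⟨β, hβ⟩).2
          · intro hs
            refine ⟨((ρ.symm ⟨s, hs⟩ : {β // β ∈ π}) : Set (Fin b)),
              (ρ.symm ⟨s, hs⟩).2, ?_⟩
            show g • ((ρ.symm ⟨s, hs⟩ : {β // β ∈ π}) : Set (Fin b)) = s
            rw [hgβ (ρ.symm ⟨s, hs⟩), ρ.apply_symm_apply]
        · show g • I = I
          rw [hIunion, Set.smul_set_iUnion]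
          have h2 : ∀ β : {β : Set (Fin b) // β ∈ π},
              g • ((β : Set (Fin b)) ∩ I) = ((ρ β : Set (Fin b)) ∩ I) := hgI'
          calc (⋃ β : {β : Set (Fin b) // β ∈ π}, g • ((β : Set (Fin b)) ∩ I))
              = ⋃ β : {β : Set (Fin b) // β ∈ π}, ((ρ β : Set (Fin b)) ∩ I) :=
                Set.iUnion_congr h2
            _ = ⋃ β : {β : Set (Fin b) // β ∈ π}, ((β : Set (Fin b)) ∩ I) :=
                ρ.surjective.iUnion_comp (fun β => (β : Set (Fin b)) ∩ I)
      exact ⟨⟨g, hgG⟩, Equiv.ext fun β => Subtype.ext (hgβ β)⟩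
end

section
/- Let V be a nonzero finite-dimensional vector space over a field of characteristic 0 with a nondegenerate alternating form E. Then the space of Sp(V,E)-equivariant endomorphisms End(V)^{Sp(V,E)} consists exactly of the scalar multiples of the identity. -/
/-!
STATEMENT 16: Let `V` be a nonzero finite-dimensional vector space over a
field of characteristic 0 with a nondegenerate alternating form `E`.  Then the
`Sp(V,E)`-equivariant endomorphisms `End(V)^{Sp(V,E)}` are exactly the scalar
multiples of the identity.
-/

theorem symplectic_invariant_endomorphisms_are_scalars
    (k : Type*) [Field k] [CharZero k]
    (V : Type*) [AddCommGroup V] [Module k V] [FiniteDimensional k V]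
    (hV : Nontrivial V)
    (E : V →ₗ[k] V →ₗ[k] k)
    (halt : ∀ x, E x x = 0)
    (hnd : ∀ x, (∀ y, E x y = 0) → x = 0) :
    ∀ f : Module.End k V,
      (∀ g : V ≃ₗ[k] V, (∀ x y, E (g x) (g y) = E x y) →
        ∀ x, f (g x) = g (f x)) ↔
      ∃ c : k, f = c • (LinearMap.id : V →ₗ[k] V) := by
  -- skew-symmetry of an alternating form
  have hskew : ∀ x y, E x y = - E y x := by
    intro x y
    have h := halt (x + y)
    simp only [map_add, LinearMap.add_apply, halt] at h
    linear_combination h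
  intro f
  constructor
  · intro h
    -- Symplectic transvections `x ↦ x + E x v • v` are symplectic; equivariance
    -- under them yields the key identity.
    have key : ∀ (v x : V), (E x v) • f v = (E (f x) v) • v := by
      intro v x
      set S : V →ₗ[k] V := LinearMap.smulRight (E.flip v) v with hS
      have hSapp : ∀ x, S x = (E x v) • v := fun _ => rfl
      have hcomp1 : (LinearMap.id + S) ∘ₗ (LinearMap.id - S) = LinearMap.id := by
        ext x
        simp [hSapp, map_sub, map_smul, halt, smul_smul]
      have hcomp2 : (LinearMap.id - S) ∘ₗ (LinearMap.id + S) = LinearMap.id := by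
        ext x
        simp [hSapp, map_add, map_smul, halt, smul_smul]
      set g : V ≃ₗ[k] V := LinearEquiv.ofLinear (LinearMap.id + S) (LinearMap.id - S)
        hcomp1 hcomp2 with hg
      have hgapp : ∀ x, g x = x + (E x v) • v := fun _ => rfl
      have hsymp : ∀ x y, E (g x) (g y) = E x y := by
        intro x y
        rw [hgapp, hgapp]
        simp only [map_add, map_smul, LinearMap.add_apply, LinearMap.smul_apply,
          smul_eq_mul, halt, mul_zero, add_zero]
        rw [hskew v y]
        ring
      have hx := h g hsymp x
      rw [hgapp, hgapp, map_add, map_smul] at hx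
      exact add_left_cancel hx
    -- every nonzero vector is an eigenvector of f
    have eig : ∀ v : V, v ≠ 0 → ∃ c : k, f v = c • v := by
      intro v hv
      obtain ⟨y, hy⟩ : ∃ y, E v y ≠ 0 := by
        by_contra hc
        push_neg at hc
        exact hv (hnd v hc)
      have hyv : E y v ≠ 0 := by
        rw [hskew]; simpa using hy
      refine ⟨(E y v)⁻¹ * (E (f y) v), ?_⟩
      rw [mul_smul, ← key v y, smul_smul, inv_mul_cancel₀ hyv, one_smul]
    -- a map with every vector an eigenvector is a scalar
    obtain ⟨v₀, hv₀⟩ := exists_ne (0 : V)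
    obtain ⟨c, hc⟩ := eig v₀ hv₀
    refine ⟨c, ?_⟩
    ext x
    simp only [LinearMap.smul_apply, LinearMap.id_coe, id_eq]
    by_cases hx : x = 0
    · simp [hx]
    by_cases hli : LinearIndependent k ![v₀, x]
    · obtain ⟨d, hd⟩ := eig x hx
      have hxv : x + v₀ ≠ 0 := by
        intro h0
        have : (1 : k) • v₀ + (1 : k) • x = 0 := by
          simpa [add_comm] using h0
        exact one_ne_zero ((LinearIndependent.pair_iff.1 hli 1 1 this).1)
      obtain ⟨e, he⟩ := eig (x + v₀) hxv
      have hsum : (e - c) • v₀ + (e - d) • x = 0 := by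
        have : d • x + c • v₀ = e • (x + v₀) := by
          rw [← hd, ← hc, ← he, map_add]
        rw [smul_add] at this
        rw [sub_smul, sub_smul]
        abel_nf
        abel_nf at this
        linear_combination (norm := abel) -this
      obtain ⟨h1, h2⟩ := LinearIndependent.pair_iff.1 hli _ _ hsum
      have hec : e = c := sub_eq_zero.1 h1
      have hed : e = d := sub_eq_zero.1 h2
      rw [hd, ← hed, hec]
    · -- x is a multiple of v₀
      rw [LinearIndependent.pair_iff' hv₀] at hli
      push_neg at hli
      obtain ⟨a, ha⟩ := hli
      rw [← ha, map_smul, hc, smul_comm]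
  · rintro ⟨c, rfl⟩ g hg x
    simp
end
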